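/- arXiv:2209.11040 — 7 statements merged into one kernel-verified Lean document; each statement's English description precedes it below -/
import Mathlib

section
/- The rank of the 2×2 matrix multiplication tensor μ_{2,2,2} is at most 7; explicitly, μ_{2,2,2} admits a decomposition as a sum of 7 simple tensors (Strassen's algorithm). -/
/-!
Strassen's algorithm computes the product of two `2 × 2` matrices with seven multiplications
`Mᵢ = aᵢ(A) · bᵢ(B)` of linear forms in the entries, and recovers `AB = ∑ Mᵢ cᵢ`. Read as a tensor,
this is exactly a decomposition `μ_{2,2,2} = ∑ᵢ aᵢ ⊗ bᵢ ⊗ cᵢ`; after expanding everything in the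
basis `eᵢⱼ ⊗ eⱼₗ ⊗ Eᵢₗ`, the identity is a linear relation with integer coefficients, so it holds
over every field.
-/

open TensorProduct

/-- The linear functional on `2 × 2` matrices picking out the `(i, j)` entry. -/
def matEntry (k : Type*) [Field k] (i j : Fin 2) :
    Module.Dual k (Matrix (Fin 2) (Fin 2) k) where
  toFun X := X i j
  map_add' := by intros; rfl
  map_smul' := by intros; rfl

/-- The `2 × 2` matrix multiplication tensor
`μ_{2,2,2} ∈ (k^{2×2})* ⊗ (k^{2×2})* ⊗ k^{2×2}`. -/
noncomputable def mu222 (k : Type*) [Field k] :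
    Module.Dual k (Matrix (Fin 2) (Fin 2) k) ⊗[k]
      (Module.Dual k (Matrix (Fin 2) (Fin 2) k) ⊗[k] Matrix (Fin 2) (Fin 2) k) :=
  ∑ i : Fin 2, ∑ j : Fin 2, ∑ l : Fin 2,
    matEntry k i j ⊗ₜ[k] (matEntry k j l ⊗ₜ[k] Matrix.single i l (1 : k))

namespace Strassen

variable (k : Type*) [Field k]

/- Strassen's formulas, with indices shifted to `Fin 2`:
`M₁ = (A₁₁ + A₂₂)(B₁₁ + B₂₂)`, `M₂ = (A₂₁ + A₂₂)B₁₁`, `M₃ = A₁₁(B₁₂ − B₂₂)`, `M₄ = A₂₂(B₂₁ − B₁₁)`,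
`M₅ = (A₁₁ + A₁₂)B₂₂`, `M₆ = (A₂₁ − A₁₁)(B₁₁ + B₁₂)`, `M₇ = (A₁₂ − A₂₂)(B₂₁ + B₂₂)`;
`C₁₁ = M₁ + M₄ − M₅ + M₇`, `C₁₂ = M₃ + M₅`, `C₂₁ = M₂ + M₄`, `C₂₂ = M₁ − M₂ + M₃ + M₆`. -/

def leftForm : Fin 7 → Module.Dual k (Matrix (Fin 2) (Fin 2) k) :=
  ![matEntry k 0 0 + matEntry k 1 1, matEntry k 1 0 + matEntry k 1 1, matEntry k 0 0,
    matEntry k 1 1, matEntry k 0 0 + matEntry k 0 1, matEntry k 1 0 - matEntry k 0 0,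
    matEntry k 0 1 - matEntry k 1 1]

def rightForm : Fin 7 → Module.Dual k (Matrix (Fin 2) (Fin 2) k) :=
  ![matEntry k 0 0 + matEntry k 1 1, matEntry k 0 0, matEntry k 0 1 - matEntry k 1 1,
    matEntry k 1 0 - matEntry k 0 0, matEntry k 1 1, matEntry k 0 0 + matEntry k 0 1,
    matEntry k 1 0 + matEntry k 1 1]

def output : Fin 7 → Matrix (Fin 2) (Fin 2) k :=
  ![Matrix.single 0 0 1 + Matrix.single 1 1 1, Matrix.single 1 0 1 - Matrix.single 1 1 1,
    Matrix.single 0 1 1 + Matrix.single 1 1 1, Matrix.single 0 0 1 + Matrix.single 1 0 1,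
    Matrix.single 0 1 1 - Matrix.single 0 0 1, Matrix.single 1 1 1, Matrix.single 0 0 1]

theorem mu222_eq_sum :
    mu222 k = ∑ i, leftForm k i ⊗ₜ[k] (rightForm k i ⊗ₜ[k] output k i) := by
  simp only [mu222, Fin.sum_univ_two, Fin.sum_univ_seven, leftForm, rightForm, output,
    Matrix.cons_val]
  -- `tmul_sub` does not fire on the inner factor (its module structure over the additive group is
  -- not reducibly the one `⊗ₜ` sees), so signs are moved out as scalars `-1` instead.
  simp only [sub_eq_add_neg, ← neg_one_smul k (M := Module.Dual k _),
    ← neg_one_smul k (M := Matrix _ _ k), add_tmul, tmul_add, ← smul_tmul', tmul_smul]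
  module

end Strassen

/-- Strassen: `μ_{2,2,2}` is a sum of 7 simple tensors, so its rank is at most 7. -/
theorem mu222_rank_le_seven (k : Type*) [Field k] :
    ∃ (a b : Fin 7 → Module.Dual k (Matrix (Fin 2) (Fin 2) k))
      (c : Fin 7 → Matrix (Fin 2) (Fin 2) k),
      mu222 k = ∑ i, a i ⊗ₜ[k] (b i ⊗ₜ[k] c i) :=
  ⟨_, _, _, Strassen.mu222_eq_sum k⟩
end

section
/- Suppose p ∈ A₁' ⊗ A₂ ⊗ ··· ⊗ A_d for a linear subspace A₁' ⊂ A₁, and p ∈ span(s₁,...,s_r) where each sᵢ = aᵢ¹ ⊗ aᵢ² ⊗ ··· ⊗ aᵢ^d is a simple tensor. Then R(p) + dim span(a₁¹,...,a_r¹) − dim A₁' ≤ r. -/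
open TensorProduct PiTensorProduct

/-- The tensor rank of an element of a tensor product: the minimal number of simple
tensors summing to it. -/
noncomputable def pTRank (k : Type*) [Field k] {ι : Type*} [Fintype ι] {A : ι → Type*}
    [∀ i, AddCommGroup (A i)] [∀ i, Module k (A i)]
    (p : ⨂[k] i, A i) : ℕ :=
  sInf {r | ∃ a : Fin r → ∀ i, A i, p = ∑ j, ⨂ₜ[k] i, a j i}

/-- If `p` is in the span of `r` simple tensors, then `pTRank k p ≤ r`. -/
lemma pTRank_le_of_mem_span (k : Type*) [Field k] {d : ℕ} {A : Fin (d + 1) → Type*}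
    [∀ i, AddCommGroup (A i)] [∀ i, Module k (A i)]
    {r : ℕ} (a : Fin r → ∀ i, A i) (p : ⨂[k] i, A i)
    (hdec : p ∈ Submodule.span k (Set.range fun j => ⨂ₜ[k] i, a j i)) :
    pTRank k p ≤ r := by
  rw [Submodule.mem_span_range_iff_exists_fun] at hdec
  obtain ⟨c, hc⟩ := hdec
  refine Nat.sInf_le ⟨fun j => Function.update (a j) 0 (c j • a j 0), ?_⟩
  rw [← hc]
  refine Finset.sum_congr rfl fun j _ => ?_
  calc c j • (⨂ₜ[k] i, a j i)
      = c j • (⨂ₜ[k] i, Function.update (a j) 0 (a j 0) i) := by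
        rw [Function.update_eq_self]
    _ = ⨂ₜ[k] i, Function.update (a j) 0 (c j • a j 0) i := by
        rw [MultilinearMap.map_update_smul]

/-- If `p` lies in `A₁' ⊗ A₂ ⊗ ⋯ ⊗ A_d` for a subspace `A₁' ⊆ A₁` and
`p ∈ span(s₁, …, s_r)` with `sⱼ = aⱼ¹ ⊗ ⋯ ⊗ aⱼ^d` simple, then
`R(p) + dim span(a₁¹, …, a_r¹) ≤ r + dim A₁'`, i.e.
`R(p) + dim span(a₁¹, …, a_r¹) − dim A₁' ≤ r`. -/
theorem rank_add_span_le (k : Type*) [Field k] {d : ℕ} {A : Fin (d + 1) → Type*}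
    [∀ i, AddCommGroup (A i)] [∀ i, Module k (A i)] [∀ i, FiniteDimensional k (A i)]
    (A₁' : Submodule k (A 0)) (p : ⨂[k] i, A i)
    (hp : p ∈ Submodule.span k
      {x : ⨂[k] i, A i | ∃ a : ∀ i, A i, a 0 ∈ A₁' ∧ x = ⨂ₜ[k] i, a i})
    {r : ℕ} (a : Fin r → ∀ i, A i)
    (hdec : p ∈ Submodule.span k (Set.range fun j => ⨂ₜ[k] i, a j i)) :
    pTRank k p + Module.finrank k (Submodule.span k (Set.range fun j => a j 0)) ≤
      r + Module.finrank k A₁' := by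
  induction r with
  | zero =>
      have h0 : (Set.range fun j : Fin 0 => a j 0) = ∅ := Set.range_eq_empty _
      have h1 : (Set.range fun j : Fin 0 => ⨂ₜ[k] i, a j i) = ∅ := Set.range_eq_empty _
      rw [h1, Submodule.span_empty, Submodule.mem_bot] at hdec
      subst hdec
      rw [h0, Submodule.span_empty, finrank_bot]
      have : pTRank k (0 : ⨂[k] i, A i) ≤ 0 :=
        Nat.sInf_le ⟨fun j : Fin 0 => fun i => 0, by simp⟩
      omega
  | succ n ih =>
      by_cases hW : Submodule.span k (Set.range fun j => a j 0) ≤ A₁'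
      · have h1 : pTRank k p ≤ n + 1 := pTRank_le_of_mem_span k a p hdec
        have h2 := Submodule.finrank_mono (R := k) hW
        omega
      · -- find w in the span, not in A₁'
        obtain ⟨w, hwW, hwA⟩ := SetLike.not_le_iff_exists.mp hW
        -- build a functional vanishing on A₁' with f w ≠ 0
        have hqw : A₁'.mkQ w ≠ 0 := by
          simpa [Submodule.mkQ_apply, Submodule.Quotient.mk_eq_zero] using hwA
        obtain ⟨φ, hφ⟩ : ∃ φ : Module.Dual k (A 0 ⧸ A₁'), φ (A₁'.mkQ w) ≠ 0 := by
          by_contra h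
          push_neg at h
          exact hqw ((Module.forall_dual_apply_eq_zero_iff k _).mp h)
        set f : A 0 →ₗ[k] k := φ.comp A₁'.mkQ with hf
        have hfA : ∀ x ∈ A₁', f x = 0 := by
          intro x hx
          simp [hf, (Submodule.Quotient.mk_eq_zero _).mpr hx]
        -- find j₀ with f (a j₀ 0) ≠ 0
        obtain ⟨j₀, hj₀⟩ : ∃ j₀, f (a j₀ 0) ≠ 0 := by
          by_contra h
          push_neg at h
          have : Submodule.span k (Set.range fun j => a j 0) ≤ LinearMap.ker f := by
            rw [Submodule.span_le]
            rintro x ⟨j, rfl⟩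
            exact h j
          exact hφ (this hwW)
        set g : A 0 →ₗ[k] A 0 :=
          LinearMap.id - ((f (a j₀ 0))⁻¹ • f).smulRight (a j₀ 0) with hg
        have hgapp : ∀ x, g x = x - ((f (a j₀ 0))⁻¹ * f x) • a j₀ 0 := by
          intro x; simp [hg, smul_smul]
        have hgker : ∀ x, f x = 0 → g x = x := by
          intro x hx; rw [hgapp, hx, mul_zero, zero_smul, sub_zero]
        have hgv : g (a j₀ 0) = 0 := by
          rw [hgapp, inv_mul_cancel₀ hj₀, one_smul, sub_self]
        have hxdecomp : ∀ x, x = g x + ((f (a j₀ 0))⁻¹ * f x) • a j₀ 0 := by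
          intro x; rw [hgapp]; abel
        set G : (⨂[k] i, A i) →ₗ[k] ⨂[k] i, A i :=
          PiTensorProduct.map (Function.update (fun i => LinearMap.id) 0 g) with hG
        have hGt : ∀ b : ∀ i, A i,
            G (⨂ₜ[k] i, b i) = ⨂ₜ[k] i, Function.update b 0 (g (b 0)) i := by
          intro b
          rw [hG, map_tprod]
          congr 1
          funext i
          by_cases hi : i = 0
          · subst hi; simp
          · simp [Function.update_of_ne hi]
        have hGp : G p = p :=
          Submodule.span_induction (p := fun x _ => G x = x)
            (fun x hx => by
              obtain ⟨b, hb0, rfl⟩ := hx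
              rw [hGt b, hgker _ (hfA _ hb0), Function.update_eq_self])
            (by simp)
            (fun x y _ _ hx hy => by simp only [map_add]; rw [hx, hy])
            (fun t x _ hx => by simp only [map_smul]; rw [hx]) hp
        -- the new family of simple tensors
        set e : Equiv.Perm (Fin (n + 1)) := Equiv.swap j₀ (Fin.last n) with he
        set a' : Fin n → ∀ i, A i :=
          fun j => Function.update (a (e j.castSucc)) 0 (g (a (e j.castSucc) 0)) with ha'
        have hA' : ∀ j : Fin (n + 1), j ≠ j₀ →
            ∃ j' : Fin n, a' j' = Function.update (a j) 0 (g (a j 0)) := by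
          intro j hj
          have hej : e j ≠ Fin.last n := by
            intro h
            apply hj
            have := congrArg e h
            rwa [Equiv.swap_apply_self, Equiv.swap_apply_right] at this
          refine ⟨(e j).castPred hej, ?_⟩
          rw [ha']
          simp only [Fin.castSucc_castPred, he, Equiv.swap_apply_self]
        -- p is in the span of the new simple tensors
        have hdec' : p ∈ Submodule.span k (Set.range fun j : Fin n => ⨂ₜ[k] i, a' j i) := by
          have h1 : p ∈ Submodule.map G
              (Submodule.span k (Set.range fun j : Fin (n+1) => ⨂ₜ[k] i, a j i)) := by
            nth_rewrite 1 [← hGp]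
            exact Submodule.mem_map_of_mem hdec
          rw [Submodule.map_span, ← Set.range_comp] at h1
          refine Submodule.span_le.mpr ?_ h1
          rintro x ⟨j, rfl⟩
          simp only [Function.comp_apply]
          rw [hGt (a j)]
          by_cases hj : j = j₀
          · rw [hj, hgv]
            have : (⨂ₜ[k] i, Function.update (a j₀) 0 (0 : A 0) i) = 0 :=
              MultilinearMap.map_update_zero (PiTensorProduct.tprod k) _ _
            rw [this]
            exact Submodule.zero_mem _
          · obtain ⟨j', hj'⟩ := hA' j hj
            rw [← hj']
            exact Submodule.subset_span ⟨j', rfl⟩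
        -- dimension bookkeeping
        set W : Submodule k (A 0) := Submodule.span k (Set.range fun j : Fin (n+1) => a j 0)
          with hWdef
        set Wn : Submodule k (A 0) := Submodule.span k (Set.range fun j : Fin n => a' j 0)
          with hWn
        have hWle : W ≤ Wn ⊔ Submodule.span k {a j₀ 0} := by
          rw [hWdef, Submodule.span_le]
          rintro x ⟨j, rfl⟩
          show a j 0 ∈ Wn ⊔ Submodule.span k {a j₀ 0}
          rw [hxdecomp (a j 0)]
          refine Submodule.add_mem _ ?_ ?_
          · by_cases hj : j = j₀
            · rw [hj, hgv]; exact Submodule.zero_mem _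
            · obtain ⟨j', hj'⟩ := hA' j hj
              have h2 : a' j' 0 = g (a j 0) := by rw [hj']; simp
              exact Submodule.mem_sup_left (h2 ▸ Submodule.subset_span ⟨j', rfl⟩)
          · exact Submodule.mem_sup_right
              (Submodule.smul_mem _ _ (Submodule.mem_span_singleton_self _))
        have hdim : Module.finrank k W ≤ Module.finrank k Wn + 1 := by
          have h1 : Module.finrank k W ≤
              Module.finrank k ↥(Wn ⊔ Submodule.span k {a j₀ 0}) :=
            Submodule.finrank_mono hWle
          have h2 : Module.finrank k ↥(Wn ⊔ Submodule.span k {a j₀ 0}) ≤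
              Module.finrank k Wn + Module.finrank k ↥(Submodule.span k {a j₀ 0}) := by
            have := Submodule.finrank_sup_add_finrank_inf_eq Wn (Submodule.span k {a j₀ 0})
            omega
          have h3 : Module.finrank k ↥(Submodule.span k ({a j₀ 0} : Set (A 0))) ≤ 1 := by
            by_cases hv0 : a j₀ 0 = 0
            · rw [hv0, Submodule.span_zero_singleton, finrank_bot]; omega
            · rw [finrank_span_singleton hv0]
          omega
        have key := ih a' hdec'
        rw [← hWn] at key
        omega
end

section
/- Let p = p' ⊕ p'' with p' ∈ A'⊗B'⊗C', p'' ∈ A''⊗B''⊗C'', and let W' = p'((A')*), W'' = p''((A'')*) be the slice spaces. Then the additivity of rank holds for the tensor, R(p) = R(p') + R(p''), if and only if it holds for the slice spaces, R(W'⊕W'') = R(W') + R(W''). -/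
set_option maxHeartbeats 1000000


open TensorProduct

/-- Tensor rank of `p ∈ A ⊗ B ⊗ C`: minimal number of simple tensors summing to `p`. -/
noncomputable def tRank (k : Type*) [Field k] {A B C : Type*} [AddCommGroup A] [Module k A]
    [AddCommGroup B] [Module k B] [AddCommGroup C] [Module k C]
    (p : A ⊗[k] (B ⊗[k] C)) : ℕ :=
  sInf {r | ∃ a : Fin r → A, ∃ b : Fin r → B, ∃ c : Fin r → C,
    p = ∑ i, a i ⊗ₜ[k] (b i ⊗ₜ[k] c i)}

/-- Rank of a subspace `W ⊆ B ⊗ C`: minimal number of rank-one matrices whose span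
contains `W`. -/
noncomputable def sRank (k : Type*) [Field k] {B C : Type*} [AddCommGroup B] [Module k B]
    [AddCommGroup C] [Module k C] (W : Submodule k (B ⊗[k] C)) : ℕ :=
  sInf {r | ∃ s : Fin r → B ⊗[k] C, (∀ i, ∃ b c, s i = b ⊗ₜ[k] c) ∧
    W ≤ Submodule.span k (Set.range s)}

/-- The slice of `p ∈ A ⊗ B ⊗ C` at a functional `α ∈ A*`. -/
noncomputable def pSlice {k : Type*} [Field k] {A B C : Type*} [AddCommGroup A] [Module k A]
    [AddCommGroup B] [Module k B] [AddCommGroup C] [Module k C]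
    (p : A ⊗[k] (B ⊗[k] C)) (α : Module.Dual k A) : B ⊗[k] C :=
  TensorProduct.lid k (B ⊗[k] C) (LinearMap.rTensor (B ⊗[k] C) α p)

/-- The slice space `p(A*) ⊆ B ⊗ C` of `p ∈ A ⊗ B ⊗ C`. -/
noncomputable def sliceSpace (k : Type*) [Field k] {A B C : Type*} [AddCommGroup A] [Module k A]
    [AddCommGroup B] [Module k B] [AddCommGroup C] [Module k C]
    (p : A ⊗[k] (B ⊗[k] C)) : Submodule k (B ⊗[k] C) :=
  Submodule.span k {w | ∃ α : Module.Dual k A, w = pSlice p α}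

/-- The direct sum tensor `p' ⊕ p''`. -/
noncomputable def dsTensor {k : Type*} [Field k] {A' A'' B' B'' C' C'' : Type*}
    [AddCommGroup A'] [Module k A'] [AddCommGroup A''] [Module k A'']
    [AddCommGroup B'] [Module k B'] [AddCommGroup B''] [Module k B'']
    [AddCommGroup C'] [Module k C'] [AddCommGroup C''] [Module k C'']
    (p' : A' ⊗[k] (B' ⊗[k] C')) (p'' : A'' ⊗[k] (B'' ⊗[k] C''))  :
    (A' × A'') ⊗[k] ((B' × B'') ⊗[k] (C' × C'')) :=
  TensorProduct.map (LinearMap.inl k A' A'')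
    (TensorProduct.map (LinearMap.inl k B' B'') (LinearMap.inl k C' C'')) p'
  + TensorProduct.map (LinearMap.inr k A' A'')
    (TensorProduct.map (LinearMap.inr k B' B'') (LinearMap.inr k C' C'')) p''

section Aux
variable {k : Type*} [Field k] {A B C : Type*} [AddCommGroup A] [Module k A]
    [AddCommGroup B] [Module k B] [AddCommGroup C] [Module k C]

lemma pSlice_tmul (a : A) (w : B ⊗[k] C) (α : Module.Dual k A) :
    pSlice (a ⊗ₜ[k] w) α = α a • w := by
  simp [pSlice]

lemma pSlice_add (p q : A ⊗[k] (B ⊗[k] C)) (α : Module.Dual k A) :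
    pSlice (p + q) α = pSlice p α + pSlice q α := by simp [pSlice]

lemma pSlice_zero (α : Module.Dual k A) : pSlice (0 : A ⊗[k] (B ⊗[k] C)) α = 0 := by
  simp [pSlice]

lemma pSlice_zero' (p : A ⊗[k] (B ⊗[k] C)) : pSlice p (0 : Module.Dual k A) = 0 := by
  simp [pSlice]

lemma pSlice_sum {ι : Type*} (s : Finset ι) (f : ι → A ⊗[k] (B ⊗[k] C))
    (α : Module.Dual k A) :
    pSlice (∑ i ∈ s, f i) α = ∑ i ∈ s, pSlice (f i) α := by simp [pSlice]

lemma pSlice_mem (p : A ⊗[k] (B ⊗[k] C)) (α : Module.Dual k A) :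
    pSlice p α ∈ sliceSpace k p :=
  Submodule.subset_span ⟨α, rfl⟩

lemma eq_sum_basis_pSlice [FiniteDimensional k A] (p : A ⊗[k] (B ⊗[k] C)) :
    p = ∑ j, (Module.finBasis k A) j ⊗ₜ[k] pSlice p ((Module.finBasis k A).coord j) := by
  set e := Module.finBasis k A
  induction p using TensorProduct.induction_on with
  | zero => simp [pSlice_zero]
  | tmul a w =>
      simp only [pSlice_tmul, Module.Basis.coord_apply]
      calc a ⊗ₜ[k] w = (∑ j, e.repr a j • e j) ⊗ₜ[k] w := by rw [Module.Basis.sum_repr]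
        _ = ∑ j, e j ⊗ₜ[k] (e.repr a j • w) := by
            rw [TensorProduct.sum_tmul]
            exact Finset.sum_congr rfl fun j _ => by
              rw [TensorProduct.smul_tmul, TensorProduct.tmul_smul]
  | add x y hx hy =>
      simp only [pSlice_add, TensorProduct.tmul_add, Finset.sum_add_distrib]
      rw [← hx, ← hy]

lemma pSlice_map {A₂ B₂ C₂ : Type*} [AddCommGroup A₂] [Module k A₂]
    [AddCommGroup B₂] [Module k B₂] [AddCommGroup C₂] [Module k C₂]
    (g : A →ₗ[k] A₂) (h : (B ⊗[k] C) →ₗ[k] (B₂ ⊗[k] C₂)) (p : A ⊗[k] (B ⊗[k] C))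
    (α : Module.Dual k A₂) :
    pSlice (TensorProduct.map g h p) α = h (pSlice p (α ∘ₗ g)) := by
  induction p using TensorProduct.induction_on with
  | zero => simp [pSlice_zero]
  | tmul a w => simp [pSlice_tmul]
  | add x y hx hy => simp [pSlice_add, hx, hy]

/-- Main Lemma 1: tensor rank equals the rank of the slice space. -/
lemma tRank_eq_sRank_sliceSpace [FiniteDimensional k A] (p : A ⊗[k] (B ⊗[k] C)) :
    tRank k p = sRank k (sliceSpace k p) := by
  unfold tRank sRank
  congr 1
  ext r
  constructor
  · rintro ⟨a, b, c, rfl⟩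
    refine ⟨fun i => b i ⊗ₜ[k] c i, fun i => ⟨b i, c i, rfl⟩, ?_⟩
    rw [sliceSpace, Submodule.span_le]
    rintro w ⟨α, rfl⟩
    rw [pSlice_sum]
    refine Submodule.sum_mem _ fun i _ => ?_
    rw [pSlice_tmul]
    exact Submodule.smul_mem _ _ (Submodule.subset_span ⟨i, rfl⟩)
  · rintro ⟨s, hs1, hs2⟩
    set e := Module.finBasis k A with he
    have hmem : ∀ j, pSlice p (e.coord j) ∈ Submodule.span k (Set.range s) :=
      fun j => hs2 (pSlice_mem p (e.coord j))
    have hcoef : ∀ j, ∃ c : Fin r → k, ∑ i, c i • s i = pSlice p (e.coord j) := by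
      intro j
      exact (Submodule.mem_span_range_iff_exists_fun k).mp (hmem j)
    choose co hco using hcoef
    choose bb cc hbc using hs1
    refine ⟨fun i => ∑ j, co j i • e j, bb, cc, ?_⟩
    have hp := eq_sum_basis_pSlice p
    rw [hp]
    calc ∑ j, e j ⊗ₜ[k] pSlice p (e.coord j)
        = ∑ j, e j ⊗ₜ[k] (∑ i, co j i • s i) := by
          exact Finset.sum_congr rfl fun j _ => by rw [hco]
      _ = ∑ j, ∑ i, (co j i • e j) ⊗ₜ[k] s i := by
          exact Finset.sum_congr rfl fun j _ => by
            rw [TensorProduct.tmul_sum]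
            exact Finset.sum_congr rfl fun i _ => (TensorProduct.smul_tmul _ _ _).symm
      _ = ∑ i, ∑ j, (co j i • e j) ⊗ₜ[k] s i := Finset.sum_comm
      _ = ∑ i, (∑ j, co j i • e j) ⊗ₜ[k] s i := by
          exact Finset.sum_congr rfl fun i _ => (TensorProduct.sum_tmul _ _ _).symm
      _ = ∑ i, (∑ j, co j i • e j) ⊗ₜ[k] (bb i ⊗ₜ[k] cc i) := by
          exact Finset.sum_congr rfl fun i _ => by rw [hbc]

end Aux

/-- Main Lemma 2: slice space of the direct sum. -/
lemma sliceSpace_dsTensor {k : Type*} [Field k] {A' A'' B' B'' C' C'' : Type*}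
    [AddCommGroup A'] [Module k A'] [AddCommGroup A''] [Module k A'']
    [AddCommGroup B'] [Module k B'] [AddCommGroup B''] [Module k B'']
    [AddCommGroup C'] [Module k C'] [AddCommGroup C''] [Module k C'']
    (p' : A' ⊗[k] (B' ⊗[k] C')) (p'' : A'' ⊗[k] (B'' ⊗[k] C'')) :
    sliceSpace k (dsTensor p' p'') =
      (sliceSpace k p').map
          (TensorProduct.map (LinearMap.inl k B' B'') (LinearMap.inl k C' C'')) ⊔
      (sliceSpace k p'').map
          (TensorProduct.map (LinearMap.inr k B' B'') (LinearMap.inr k C' C'')) := by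
  set j' := TensorProduct.map (LinearMap.inl k B' B'') (LinearMap.inl k C' C'')
  set j'' := TensorProduct.map (LinearMap.inr k B' B'') (LinearMap.inr k C' C'')
  have key : ∀ α : Module.Dual k (A' × A''),
      pSlice (dsTensor p' p'') α =
        j' (pSlice p' (α ∘ₗ LinearMap.inl k A' A'')) +
        j'' (pSlice p'' (α ∘ₗ LinearMap.inr k A' A'')) := by
    intro α
    unfold dsTensor
    rw [pSlice_add,
      pSlice_map (LinearMap.inl k A' A'') j' p' α,
      pSlice_map (LinearMap.inr k A' A'') j'' p'' α]
  apply le_antisymm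
  · rw [sliceSpace, Submodule.span_le]
    rintro w ⟨α, rfl⟩
    rw [key]
    exact add_mem (Submodule.mem_sup_left (Submodule.mem_map_of_mem (pSlice_mem _ _)))
      (Submodule.mem_sup_right (Submodule.mem_map_of_mem (pSlice_mem _ _)))
  · refine sup_le ?_ ?_
    · rw [Submodule.map_le_iff_le_comap, sliceSpace, Submodule.span_le]
      rintro w ⟨β, rfl⟩
      have : j' (pSlice p' β) = pSlice (dsTensor p' p'') (β ∘ₗ LinearMap.fst k A' A'') := by
        rw [key]
        have h1 : (β ∘ₗ LinearMap.fst k A' A'') ∘ₗ LinearMap.inl k A' A'' = β := by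
          ext a; simp
        have h2 : (β ∘ₗ LinearMap.fst k A' A'') ∘ₗ LinearMap.inr k A' A'' = 0 := by
          ext a; simp
        rw [h1, h2, pSlice_zero', map_zero, add_zero]
      rw [SetLike.mem_coe, Submodule.mem_comap, this]
      exact pSlice_mem _ _
    · rw [Submodule.map_le_iff_le_comap, sliceSpace, Submodule.span_le]
      rintro w ⟨β, rfl⟩
      have : j'' (pSlice p'' β) = pSlice (dsTensor p' p'') (β ∘ₗ LinearMap.snd k A' A'') := by
        rw [key]
        have h1 : (β ∘ₗ LinearMap.snd k A' A'') ∘ₗ LinearMap.inl k A' A'' = 0 := by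
          ext a; simp
        have h2 : (β ∘ₗ LinearMap.snd k A' A'') ∘ₗ LinearMap.inr k A' A'' = β := by
          ext a; simp
        rw [h1, h2, pSlice_zero', map_zero, zero_add]
      rw [SetLike.mem_coe, Submodule.mem_comap, this]
      exact pSlice_mem _ _

/-- Additivity of rank holds for the direct sum tensor `p = p' ⊕ p''` if and only if it
holds for the corresponding slice spaces `W' = p'(A'*)`, `W'' = p''(A''*)`. -/
theorem tRank_additive_iff_sRank_additive {k : Type*} [Field k] {A' A'' B' B'' C' C'' : Type*}
    [AddCommGroup A'] [Module k A'] [FiniteDimensional k A']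
    [AddCommGroup A''] [Module k A''] [FiniteDimensional k A'']
    [AddCommGroup B'] [Module k B'] [FiniteDimensional k B']
    [AddCommGroup B''] [Module k B''] [FiniteDimensional k B'']
    [AddCommGroup C'] [Module k C'] [FiniteDimensional k C']
    [AddCommGroup C''] [Module k C''] [FiniteDimensional k C'']
    (p' : A' ⊗[k] (B' ⊗[k] C')) (p'' : A'' ⊗[k] (B'' ⊗[k] C'')) :
    tRank k (dsTensor p' p'') = tRank k p' + tRank k p'' ↔
      sRank k
        ((sliceSpace k p').map
            (TensorProduct.map (LinearMap.inl k B' B'') (LinearMap.inl k C' C'')) ⊔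
         (sliceSpace k p'').map
            (TensorProduct.map (LinearMap.inr k B' B'') (LinearMap.inr k C' C''))) =
      sRank k (sliceSpace k p') + sRank k (sliceSpace k p'') := by
  rw [tRank_eq_sRank_sliceSpace, tRank_eq_sRank_sliceSpace, tRank_eq_sRank_sliceSpace,
    sliceSpace_dsTensor]
end

section
/- Let p ∈ A⊗B⊗C with R(p) = r > 0, and let α ∈ A* with p(α) ≠ 0 in B⊗C. Then there exists a ∈ A with α(a) = 1 such that the tensor p̃_a := p − a⊗p(α) ∈ α^⊥ ⊗ B ⊗ C satisfies R(p̃_a) ≤ r − 1. -/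
/-! Write `p = ∑ᵢ aᵢ ⊗ bᵢ ⊗ cᵢ` with `r` terms. Then `p(α) = ∑ᵢ α(aᵢ) bᵢ ⊗ cᵢ ≠ 0`, so some
`α(aᵢ₀) ≠ 0`; for `a = aᵢ₀ / α(aᵢ₀)` we get `p − a ⊗ p(α) = ∑ᵢ (aᵢ − α(aᵢ) a) ⊗ bᵢ ⊗ cᵢ`,
whose `i₀`-th term vanishes. -/

open TensorProduct

section

variable {k : Type*} [Field k] {A B C : Type*} [AddCommGroup A] [Module k A]
  [AddCommGroup B] [Module k B] [AddCommGroup C] [Module k C]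

variable (k) in
def HasRankDecomp (p : A ⊗[k] (B ⊗[k] C)) (n : ℕ) : Prop :=
  ∃ a : Fin n → A, ∃ b : Fin n → B, ∃ c : Fin n → C, p = ∑ i, a i ⊗ₜ[k] (b i ⊗ₜ[k] c i)

theorem hasRankDecomp_zero : HasRankDecomp k (0 : A ⊗[k] (B ⊗[k] C)) 0 :=
  ⟨Fin.elim0, Fin.elim0, Fin.elim0, by simp⟩

theorem hasRankDecomp_tmul_tmul (a : A) (b : B) (c : C) :
    HasRankDecomp k (a ⊗ₜ[k] (b ⊗ₜ[k] c)) 1 :=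
  ⟨fun _ => a, fun _ => b, fun _ => c, by simp⟩

theorem HasRankDecomp.add {p q : A ⊗[k] (B ⊗[k] C)} {m n : ℕ} (hp : HasRankDecomp k p m)
    (hq : HasRankDecomp k q n) : HasRankDecomp k (p + q) (m + n) := by
  obtain ⟨a, b, c, rfl⟩ := hp
  obtain ⟨a', b', c', rfl⟩ := hq
  exact ⟨Fin.append a a', Fin.append b b', Fin.append c c', by simp [Fin.sum_univ_add]⟩

theorem exists_hasRankDecomp (p : A ⊗[k] (B ⊗[k] C)) : ∃ n, HasRankDecomp k p n := by
  induction p using TensorProduct.induction_on with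
  | zero => exact ⟨0, hasRankDecomp_zero⟩
  | tmul a x =>
    induction x using TensorProduct.induction_on with
    | zero => exact ⟨0, by simpa using hasRankDecomp_zero⟩
    | tmul b c => exact ⟨1, hasRankDecomp_tmul_tmul a b c⟩
    | add x y hx hy =>
      obtain ⟨m, hm⟩ := hx
      obtain ⟨n, hn⟩ := hy
      exact ⟨m + n, by simpa [tmul_add] using hm.add hn⟩
  | add p q hp hq =>
    obtain ⟨m, hm⟩ := hp
    obtain ⟨n, hn⟩ := hq
    exact ⟨m + n, hm.add hn⟩

theorem hasRankDecomp_tRank (p : A ⊗[k] (B ⊗[k] C)) : HasRankDecomp k p (tRank k p) :=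
  Nat.sInf_mem (exists_hasRankDecomp p)

theorem tRank_le_of_hasRankDecomp {p : A ⊗[k] (B ⊗[k] C)} {n : ℕ} (h : HasRankDecomp k p n) :
    tRank k p ≤ n :=
  Nat.sInf_le h

theorem hasRankDecomp_of_eq_zero {p : A ⊗[k] (B ⊗[k] C)} {n : ℕ} {a : Fin (n + 1) → A}
    {b : Fin (n + 1) → B} {c : Fin (n + 1) → C} (hp : p = ∑ i, a i ⊗ₜ[k] (b i ⊗ₜ[k] c i))
    {i₀ : Fin (n + 1)} (h : a i₀ = 0) : HasRankDecomp k p n :=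
  ⟨a ∘ i₀.succAbove, b ∘ i₀.succAbove, c ∘ i₀.succAbove, by
    simpa [Fin.sum_univ_succAbove _ i₀, h] using hp⟩

theorem pSlice_sum_tmul {ι : Type*} (s : Finset ι) (a : ι → A) (x : ι → B ⊗[k] C)
    (α : Module.Dual k A) : pSlice (∑ i ∈ s, a i ⊗ₜ[k] x i) α = ∑ i ∈ s, α (a i) • x i := by
  simp [pSlice, map_sum]

theorem sum_tmul_sub_tmul_pSlice {ι : Type*} (s : Finset ι) (a : ι → A) (x : ι → B ⊗[k] C)
    (α : Module.Dual k A) (a₀ : A) :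
    ∑ i ∈ s, a i ⊗ₜ[k] x i - a₀ ⊗ₜ[k] pSlice (∑ i ∈ s, a i ⊗ₜ[k] x i) α =
      ∑ i ∈ s, (a i - α (a i) • a₀) ⊗ₜ[k] x i := by
  simp [pSlice_sum_tmul, tmul_sum, sub_tmul, smul_tmul']

end

theorem substitution_exists_rank_drop_general {k : Type*} [Field k] {A B C : Type*} [AddCommGroup A] [Module k A]
    [AddCommGroup B] [Module k B]
    [AddCommGroup C] [Module k C]
    (p : A ⊗[k] (B ⊗[k] C)) {r : ℕ} (hr : tRank k p = r) (hr0 : 0 < r)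
    (α : Module.Dual k A) (hα : pSlice p α ≠ 0) :
    ∃ a : A, α a = 1 ∧ tRank k (p - a ⊗ₜ[k] pSlice p α) ≤ r - 1 := by
  obtain ⟨m, rfl⟩ : ∃ m, r = m + 1 := ⟨r - 1, (Nat.succ_pred_eq_of_pos hr0).symm⟩
  obtain ⟨a, b, c, hp⟩ := hr ▸ hasRankDecomp_tRank p
  obtain ⟨i₀, hi₀⟩ : ∃ i₀, α (a i₀) ≠ 0 := by
    by_contra! h
    exact hα (by simp [hp, pSlice_sum_tmul, h])
  set a₀ := (α (a i₀))⁻¹ • a i₀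
  have ha₀ : α a₀ = 1 := by simp [a₀, hi₀]
  refine ⟨a₀, ha₀, tRank_le_of_hasRankDecomp ?_⟩
  rw [Nat.add_sub_cancel, hp]
  refine hasRankDecomp_of_eq_zero (sum_tmul_sub_tmul_pSlice _ _ _ α a₀) (i₀ := i₀) ?_
  simp [a₀, smul_smul, hi₀]

/-- Substitution method, part (1): if `R(p) = r > 0` and `p(α) ≠ 0`, then for some
`a ∈ A` with `α(a) = 1` the tensor `p̃ₐ = p − a ⊗ p(α)` has rank at most `r − 1`. -/
theorem substitution_exists_rank_drop {k : Type*} [Field k] {A B C : Type*} [AddCommGroup A] [Module k A] [FiniteDimensional k A]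
    [AddCommGroup B] [Module k B] [FiniteDimensional k B]
    [AddCommGroup C] [Module k C] [FiniteDimensional k C]
    (p : A ⊗[k] (B ⊗[k] C)) {r : ℕ} (hr : tRank k p = r) (hr0 : 0 < r)
    (α : Module.Dual k A) (hα : pSlice p α ≠ 0) :
    ∃ a : A, α a = 1 ∧ tRank k (p - a ⊗ₜ[k] pSlice p α) ≤ r - 1 :=
  substitution_exists_rank_drop_general p hr hr0 α hα
end

section
/- Let p ∈ A⊗B⊗C with R(p) = r, and let α ∈ A* be such that the slice p(α) ∈ B⊗C has rank one. Then for every a ∈ A with α(a) = 1, the tensor p̃_a := p − a⊗p(α) satisfies R(p̃_a) ≥ r − 1. -/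
open TensorProduct

theorem exists_decomp {k : Type*} [Field k] {A B C : Type*} [AddCommGroup A] [Module k A]
    [AddCommGroup B] [Module k B] [AddCommGroup C] [Module k C]
    (q : A ⊗[k] (B ⊗[k] C)) : ∃ n, ∃ a : Fin n → A, ∃ b : Fin n → B, ∃ c : Fin n → C,
    q = ∑ i, a i ⊗ₜ[k] (b i ⊗ₜ[k] c i) := by
  induction q using TensorProduct.induction_on with
  | zero => exact ⟨0, Fin.elim0, Fin.elim0, Fin.elim0, by simp⟩
  | tmul x m =>
    induction m using TensorProduct.induction_on with
    | zero => exact ⟨0, Fin.elim0, Fin.elim0, Fin.elim0, by simp⟩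
    | tmul y z => exact ⟨1, fun _ => x, fun _ => y, fun _ => z, by simp⟩
    | add m₁ m₂ h₁ h₂ =>
      obtain ⟨n₁, a₁, b₁, c₁, e₁⟩ := h₁
      obtain ⟨n₂, a₂, b₂, c₂, e₂⟩ := h₂
      refine ⟨n₁ + n₂, Fin.append a₁ a₂, Fin.append b₁ b₂, Fin.append c₁ c₂, ?_⟩
      rw [Fin.sum_univ_add]
      simp only [Fin.append_left, Fin.append_right]
      rw [TensorProduct.tmul_add, e₁, e₂]
  | add q₁ q₂ h₁ h₂ =>
    obtain ⟨n₁, a₁, b₁, c₁, e₁⟩ := h₁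
    obtain ⟨n₂, a₂, b₂, c₂, e₂⟩ := h₂
    refine ⟨n₁ + n₂, Fin.append a₁ a₂, Fin.append b₁ b₂, Fin.append c₁ c₂, ?_⟩
    rw [Fin.sum_univ_add]
    simp only [Fin.append_left, Fin.append_right]
    rw [e₁, e₂]

/-- Substitution method, part (2): if the slice `p(α)` has matrix rank one, then for
every `a ∈ A` with `α(a) = 1`, the tensor `p̃ₐ = p − a ⊗ p(α)` has rank at least
`r − 1` where `r = R(p)`. -/
theorem substitution_rank_drop_at_most_one {k : Type*} [Field k] {A B C : Type*} [AddCommGroup A] [Module k A] [FiniteDimensional k A]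
    [AddCommGroup B] [Module k B] [FiniteDimensional k B]
    [AddCommGroup C] [Module k C] [FiniteDimensional k C]
    (p : A ⊗[k] (B ⊗[k] C)) {r : ℕ} (hr : tRank k p = r)
    (α : Module.Dual k A) (hα1 : ∃ b c, pSlice p α = b ⊗ₜ[k] c) (hα0 : pSlice p α ≠ 0) :
    ∀ a : A, α a = 1 → r - 1 ≤ tRank k (p - a ⊗ₜ[k] pSlice p α) := by
  intro a _
  obtain ⟨b₀, c₀, hbc⟩ := hα1
  set q := p - a ⊗ₜ[k] pSlice p α with hq
  -- the defining set for tRank q is nonempty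
  obtain ⟨n, a', b', c', hdec⟩ := exists_decomp (k := k) q
  have hne : {r | ∃ a : Fin r → A, ∃ b : Fin r → B, ∃ c : Fin r → C,
      q = ∑ i, a i ⊗ₜ[k] (b i ⊗ₜ[k] c i)}.Nonempty := ⟨n, a', b', c', hdec⟩
  have hmem := Nat.sInf_mem hne
  obtain ⟨a'', b'', c'', hdec'⟩ := hmem
  have hp : p = ∑ i, (Fin.snoc a'' a) i ⊗ₜ[k]
      ((Fin.snoc b'' b₀) i ⊗ₜ[k] (Fin.snoc c'' c₀) i) := by
    rw [Fin.sum_univ_castSucc]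
    simp only [Fin.snoc_castSucc, Fin.snoc_last]
    rw [← hdec', hq, hbc]
    abel
  have hle : tRank k p ≤ tRank k q + 1 := Nat.sInf_le ⟨_, _, _, hp⟩
  omega
end

section
/- Suppose k is algebraically closed, p ∈ A⊗B⊗k² is a nonzero concise tensor, and dim A ≥ dim B. Then the slice space p(A*) ⊆ B⊗k² contains a matrix of rank one. -/
open TensorProduct

/-- The subspace `A₀ ⊗ B₀ ⊗ C₀ ⊆ A ⊗ B ⊗ C` spanned by simple tensors with factors
in the submodules `A₀, B₀, C₀`. -/
noncomputable def subTriple (k : Type*) [Field k] {A B C : Type*} [AddCommGroup A] [Module k A]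
    [AddCommGroup B] [Module k B] [AddCommGroup C] [Module k C]
    (A₀ : Submodule k A) (B₀ : Submodule k B) (C₀ : Submodule k C) :
    Submodule k (A ⊗[k] (B ⊗[k] C)) :=
  Submodule.span k {x | ∃ a ∈ A₀, ∃ b ∈ B₀, ∃ c ∈ C₀, x = a ⊗ₜ[k] (b ⊗ₜ[k] c)}

/-!
Proof. Identify `B ⊗ k²` with `B × B`, so that the slice map becomes a pencil of two maps
`X, Y : A* → B`, injective jointly by `A`-conciseness. If `Y` has a nonzero kernel vector `α`,
the slice at `α` is `X α ⊗ e₀`. Otherwise `Y` is an isomorphism, since `dim A* ≥ dim B`, and an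
eigenvector `b` of `X Y⁻¹` with eigenvalue `μ` gives the slice `b ⊗ (μ, 1)` at `α = Y⁻¹ b`.
-/

section Pencil

variable {k V W : Type*} [Field k] [IsAlgClosed k]
  [AddCommGroup V] [Module k V] [Nontrivial V]
  [AddCommGroup W] [Module k W] [FiniteDimensional k W]

theorem LinearMap.exists_ne_zero_apply_eq_smul_of_finrank_le (X Y : V →ₗ[k] W)
    (hdim : Module.finrank k W ≤ Module.finrank k V) :
    ∃ v ≠ 0, ∃ (w : W) (s t : k), X v = s • w ∧ Y v = t • w := by
  by_cases hY : Function.Injective Y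
  · have hrank : Module.finrank k V = Module.finrank k W :=
      le_antisymm (LinearMap.finrank_le_finrank_of_injective hY) hdim
    let Ye := LinearEquiv.ofInjectiveOfFinrankEq Y hY hrank
    have : Nontrivial W := Ye.toEquiv.nontrivial_congr.mp ‹_›
    obtain ⟨μ, hμ⟩ := Module.End.exists_eigenvalue (X ∘ₗ Ye.symm.toLinearMap)
    obtain ⟨w, hw⟩ := hμ.exists_hasEigenvector
    refine ⟨Ye.symm w, Ye.symm.map_ne_zero_iff.mpr hw.2, w, μ, 1, hw.apply_eq_smul, ?_⟩
    rw [one_smul]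
    exact Ye.apply_symm_apply w
  · obtain ⟨v, hYv, hv⟩ := Submodule.exists_mem_ne_zero_of_ne_bot
      (mt LinearMap.ker_eq_bot.mp hY)
    exact ⟨v, hv, X v, 1, 0, (one_smul k _).symm, by rw [zero_smul]; exact hYv⟩

end Pencil

section Slice

variable {k : Type*} [Field k] {A B C : Type*} [AddCommGroup A] [Module k A]
  [AddCommGroup B] [Module k B] [AddCommGroup C] [Module k C]

noncomputable def sliceMap (p : A ⊗[k] (B ⊗[k] C)) : Module.Dual k A →ₗ[k] B ⊗[k] C where
  toFun := pSlice p
  map_add' α β := by simp [pSlice, LinearMap.rTensor_add]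
  map_smul' c α := by simp [pSlice, LinearMap.rTensor_smul]

theorem range_rTensor_subtype_le_subTriple (A₀ : Submodule k A) :
    LinearMap.range (LinearMap.rTensor (B ⊗[k] C) A₀.subtype) ≤ subTriple k A₀ ⊤ ⊤ := by
  rintro _ ⟨q, rfl⟩
  induction q using TensorProduct.induction_on with
  | zero => simp
  | add q₁ q₂ h₁ h₂ => rw [map_add]; exact add_mem h₁ h₂
  | tmul a m =>
    rw [LinearMap.rTensor_tmul]
    induction m using TensorProduct.induction_on with
    | zero => simp
    | add m₁ m₂ h₁ h₂ => rw [tmul_add]; exact add_mem h₁ h₂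
    | tmul b c => exact Submodule.subset_span ⟨a, a.2, b, trivial, c, trivial, rfl⟩

theorem mem_subTriple_ker_of_pSlice_eq_zero (p : A ⊗[k] (B ⊗[k] C)) {α : Module.Dual k A}
    (hα : α ≠ 0) (h : pSlice p α = 0) : p ∈ subTriple k (LinearMap.ker α) ⊤ ⊤ := by
  have hα_surj : Function.Surjective α :=
    (LinearMap.surjective_or_eq_zero α).resolve_right hα
  have hexact := rTensor_exact (B ⊗[k] C) (LinearMap.exact_subtype_ker_map α) hα_surj
  have hrTensor : LinearMap.rTensor (B ⊗[k] C) α p = 0 :=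
    (TensorProduct.lid k (B ⊗[k] C)).map_eq_zero_iff.mp h
  exact range_rTensor_subtype_le_subTriple _ ((hexact p).mp hrTensor)

theorem sliceMap_injective (p : A ⊗[k] (B ⊗[k] C))
    (hconc : ∀ A₀ : Submodule k A, p ∈ subTriple k A₀ ⊤ ⊤ → A₀ = ⊤) :
    Function.Injective (sliceMap p) := by
  refine (injective_iff_map_eq_zero _).mpr fun α h => ?_
  by_contra hα
  exact hα (LinearMap.ker_eq_top.mp (hconc _ (mem_subTriple_ker_of_pSlice_eq_zero p hα h)))

end Slice

theorem TensorProduct.eq_tmul_of_piScalarRight_eq {k B ι : Type*} [Field k]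
    [AddCommGroup B] [Module k B] [Fintype ι] [DecidableEq ι]
    {x : B ⊗[k] (ι → k)} {b : B} {c : ι → k}
    (h : ∀ i, piScalarRight k k B ι x i = c i • b) : x = b ⊗ₜ[k] c :=
  (piScalarRight k k B ι).injective <| funext fun i => by simp [h]

/-- Over an algebraically closed field, a nonzero concise tensor `p ∈ A ⊗ B ⊗ k²` with
`dim A ≥ dim B` has a rank-one matrix in its slice space `p(A*) ⊆ B ⊗ k²`. -/
theorem exists_rank_one_slice {k : Type*} [Field k] [IsAlgClosed k] {A B : Type*}
    [AddCommGroup A] [Module k A] [FiniteDimensional k A]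
    [AddCommGroup B] [Module k B] [FiniteDimensional k B]
    (p : A ⊗[k] (B ⊗[k] (Fin 2 → k))) (hp : p ≠ 0)
    (hconc : ∀ (A₀ : Submodule k A) (B₀ : Submodule k B) (C₀ : Submodule k (Fin 2 → k)),
      p ∈ subTriple k A₀ B₀ C₀ → A₀ = ⊤ ∧ B₀ = ⊤ ∧ C₀ = ⊤)
    (hdim : Module.finrank k B ≤ Module.finrank k A) :
    ∃ w ∈ sliceSpace k p, (∃ (b : B) (c : Fin 2 → k), w = b ⊗ₜ[k] c) ∧ w ≠ 0 := by
  have : Nontrivial A := by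
    by_contra hA
    have := not_nontrivial_iff_subsingleton.mp hA
    exact hp (Subsingleton.elim p 0)
  let ψ := piScalarRight k k B (Fin 2)
  let pencil i := LinearMap.proj i ∘ₗ ψ.toLinearMap ∘ₗ sliceMap p
  obtain ⟨α, hα, b, s, t, hX, hY⟩ :=
    (pencil 0).exists_ne_zero_apply_eq_smul_of_finrank_le (pencil 1)
      (Subspace.dual_finrank_eq (K := k) (V := A) ▸ hdim)
  have hrank_one : pSlice p α = b ⊗ₜ[k] ![s, t] :=
    eq_tmul_of_piScalarRight_eq fun i => by
      fin_cases i
      exacts [hX, hY]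
  refine ⟨pSlice p α, Submodule.subset_span ⟨α, rfl⟩, ⟨b, _, hrank_one⟩, ?_⟩
  exact (map_ne_zero_iff _ (sliceMap_injective p fun A₀ h => (hconc A₀ ⊤ ⊤ h).1)).mpr hα
end

section
/- Let W = W'⊕W'' ⊆ (B'⊕B'')⊗(C'⊕C'') with W' ⊆ B'⊗C', W'' ⊆ B''⊗C''. Let V ⊇ W be a minimal decomposition of W (dim V = R(W), V spanned by rank-one matrices), let E'' ⊆ B'' be the minimal subspace such that the projection π_{C''}(V) ⊆ B⊗C' is contained in (B'⊕E'')⊗C', and set e'' = dim E''. Then R(W') + e'' ≤ R(W) − dim W''. -/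
set_option maxHeartbeats 1000000
set_option synthInstance.maxHeartbeats 400000


open TensorProduct

/-- The subspace `S ⊗ T ⊆ B ⊗ C` spanned by simple tensors with factors in the
submodules `S` and `T`. -/
noncomputable def tensorSub (k : Type*) [Field k] {B C : Type*} [AddCommGroup B] [Module k B]
    [AddCommGroup C] [Module k C] (S : Submodule k B) (T : Submodule k C) :
    Submodule k (B ⊗[k] C) :=
  Submodule.span k {x | ∃ b ∈ S, ∃ c ∈ T, x = b ⊗ₜ[k] c}

/-- `V` is a minimal decomposition of `W`: it contains `W`, has dimension `R(W)`, and is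
spanned by the rank-one matrices it contains. -/
def IsMinDecomp (k : Type*) [Field k] {B C : Type*} [AddCommGroup B] [Module k B]
    [AddCommGroup C] [Module k C] (W V : Submodule k (B ⊗[k] C)) : Prop :=
  W ≤ V ∧ Module.finrank k V = sRank k W ∧
    V = Submodule.span k {v | v ∈ V ∧ ∃ b c, v = b ⊗ₜ[k] c}

section Blocks

variable (k : Type*) [Field k] (B' B'' C' C'' : Type*)
  [AddCommGroup B'] [Module k B'] [AddCommGroup B''] [Module k B'']
  [AddCommGroup C'] [Module k C'] [AddCommGroup C''] [Module k C'']

/-- The inclusion `B' ⊗ C' → (B' ⊕ B'') ⊗ (C' ⊕ C'')`. -/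
noncomputable def ιL : B' ⊗[k] C' →ₗ[k] (B' × B'') ⊗[k] (C' × C'') :=
  TensorProduct.map (LinearMap.inl k B' B'') (LinearMap.inl k C' C'')

/-- The inclusion `B'' ⊗ C'' → (B' ⊕ B'') ⊗ (C' ⊕ C'')`. -/
noncomputable def ιR : B'' ⊗[k] C'' →ₗ[k] (B' × B'') ⊗[k] (C' × C'') :=
  TensorProduct.map (LinearMap.inr k B' B'') (LinearMap.inr k C' C'')

/-- The projection `π_{C''} : B ⊗ C → B ⊗ C'` with kernel `B ⊗ C''`. -/
noncomputable def projCbis : (B' × B'') ⊗[k] (C' × C'') →ₗ[k] (B' × B'') ⊗[k] C' :=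
  TensorProduct.map LinearMap.id (LinearMap.fst k C' C'')

/-- The projection `π_{C'} : B ⊗ C → B ⊗ C''` with kernel `B ⊗ C'`. -/
noncomputable def projCprim : (B' × B'') ⊗[k] (C' × C'') →ₗ[k] (B' × B'') ⊗[k] C'' :=
  TensorProduct.map LinearMap.id (LinearMap.snd k C' C'')

/-- The projection `π_{B''} : B ⊗ C → B' ⊗ C` with kernel `B'' ⊗ C`. -/
noncomputable def projBbis : (B' × B'') ⊗[k] (C' × C'') →ₗ[k] B' ⊗[k] (C' × C'') :=
  TensorProduct.map (LinearMap.fst k B' B'') LinearMap.id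

/-- The projection `π_{B'} : B ⊗ C → B'' ⊗ C` with kernel `B' ⊗ C`. -/
noncomputable def projBprim : (B' × B'') ⊗[k] (C' × C'') →ₗ[k] B'' ⊗[k] (C' × C'') :=
  TensorProduct.map (LinearMap.snd k B' B'') LinearMap.id

variable {k B' B'' C' C''}

/-- `E'' ⊆ B''` satisfies `π_{C''}(V) ⊆ (B' ⊕ E'') ⊗ C'`. -/
noncomputable def IsEbisBound (V : Submodule k ((B' × B'') ⊗[k] (C' × C'')))
    (E'' : Submodule k B'') : Prop :=
  V.map (projCbis k B' B'' C' C'') ≤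
    tensorSub k (LinearMap.range (LinearMap.inl k B' B'') ⊔ E''.map (LinearMap.inr k B' B''))
      (⊤ : Submodule k C')

/-- `E' ⊆ B'` satisfies `π_{C'}(V) ⊆ (E' ⊕ B'') ⊗ C''`. -/
noncomputable def IsEprimBound (V : Submodule k ((B' × B'') ⊗[k] (C' × C'')))
    (E' : Submodule k B') : Prop :=
  V.map (projCprim k B' B'' C' C'') ≤
    tensorSub k (E'.map (LinearMap.inl k B' B'') ⊔ LinearMap.range (LinearMap.inr k B' B''))
      (⊤ : Submodule k C'')

/-- `F'' ⊆ C''` satisfies `π_{B''}(V) ⊆ B' ⊗ (C' ⊕ F'')`. -/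
noncomputable def IsFbisBound (V : Submodule k ((B' × B'') ⊗[k] (C' × C'')))
    (F'' : Submodule k C'') : Prop :=
  V.map (projBbis k B' B'' C' C'') ≤
    tensorSub k (⊤ : Submodule k B')
      (LinearMap.range (LinearMap.inl k C' C'') ⊔ F''.map (LinearMap.inr k C' C''))

/-- `F' ⊆ C'` satisfies `π_{B'}(V) ⊆ B'' ⊗ (F' ⊕ C'')`. -/
noncomputable def IsFprimBound (V : Submodule k ((B' × B'') ⊗[k] (C' × C'')))
    (F' : Submodule k C') : Prop :=
  V.map (projBprim k B' B'' C' C'') ≤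
    tensorSub k (⊤ : Submodule k B'')
      (F'.map (LinearMap.inl k C' C'') ⊔ LinearMap.range (LinearMap.inr k C' C''))

end Blocks

section Aux

variable {k : Type*} [Field k]

/-- If a family of `n` simple tensors spans a subspace containing `W`, then `R(W) ≤ n`. -/
lemma sRank_le_of_family {B C : Type*} [AddCommGroup B] [Module k B] [AddCommGroup C]
    [Module k C] (W : Submodule k (B ⊗[k] C)) {n : ℕ} (s : Fin n → B ⊗[k] C)
    (hs : ∀ i, ∃ b c, s i = b ⊗ₜ[k] c) (hW : W ≤ Submodule.span k (Set.range s)) :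
    sRank k W ≤ n :=
  Nat.sInf_le ⟨s, hs, hW⟩

/-- Rank-nullity style bound for the image of a submodule under a linear map killing a
given subspace. Stated over abstract modules. -/
lemma finrank_map_add_finrank_le {M N : Type*} [AddCommGroup M] [Module k M]
    [AddCommGroup N] [Module k N] [FiniteDimensional k M] (f : M →ₗ[k] N)
    (p X : Submodule k M) (hX : X ≤ p) (hXf : X.map f = ⊥) :
    Module.finrank k (p.map f) + Module.finrank k X ≤ Module.finrank k p := by
  have hrn := LinearMap.finrank_range_add_finrank_ker (f ∘ₗ p.subtype)
  have hrange : LinearMap.range (f ∘ₗ p.subtype) = p.map f := by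
    rw [LinearMap.range_comp, Submodule.range_subtype]
  rw [hrange] at hrn
  have hYker : Submodule.comap p.subtype X ≤ LinearMap.ker (f ∘ₗ p.subtype) := by
    rintro ⟨x, hxp⟩ hx
    simp only [Submodule.mem_comap, Submodule.coe_subtype] at hx
    rw [LinearMap.mem_ker, LinearMap.comp_apply]
    have : f x ∈ X.map f := Submodule.mem_map.mpr ⟨x, hx, rfl⟩
    rw [hXf] at this
    simpa using this
  have hfr1 : Module.finrank k (Submodule.comap p.subtype X) = Module.finrank k X :=
    (Submodule.comapSubtypeEquivOfLe hX).finrank_eq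
  have hmono := Submodule.finrank_mono hYker
  omega

variable {B' B'' C' : Type*} [AddCommGroup B'] [Module k B']
  [AddCommGroup B''] [Module k B''] [FiniteDimensional k B'']
  [AddCommGroup C'] [Module k C']

/-- Base case of the substitution induction: all second components vanish. -/
lemma key_base (W' : Submodule k (B' ⊗[k] C')) (n : ℕ) (β : Fin n → B' × B'')
    (γ : Fin n → C') (h0 : ∀ i, (β i).2 = 0)
    (hW : W'.map (TensorProduct.map (LinearMap.inl k B' B'')
        (LinearMap.id (R := k) (M := C'))) ≤
      Submodule.span k (Set.range fun i => β i ⊗ₜ[k] γ i)) :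
    sRank k W' + Module.finrank k (Submodule.span k (Set.range fun i => (β i).2)) ≤ n := by
  have hbot : Submodule.span k (Set.range fun i => (β i).2) = ⊥ := by
    rw [Submodule.span_eq_bot]
    rintro x ⟨i, rfl⟩
    exact h0 i
  set ι₀ := TensorProduct.map (LinearMap.inl k B' B'') (LinearMap.id (R := k) (M := C'))
    with hι₀
  set g := TensorProduct.map (LinearMap.fst k B' B'') (LinearMap.id (R := k) (M := C'))
    with hg
  have hgι : g ∘ₗ ι₀ = LinearMap.id := by
    rw [hg, hι₀, ← TensorProduct.map_comp, LinearMap.fst_comp_inl, LinearMap.id_comp,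
      TensorProduct.map_id]
  have hinj : Function.Injective ι₀ := by
    intro x y hxy
    have h := congrArg g hxy
    rw [← LinearMap.comp_apply, ← LinearMap.comp_apply, hgι] at h
    simpa using h
  set s : Fin n → B' ⊗[k] C' := fun i => (β i).1 ⊗ₜ[k] γ i with hs
  have hfam : (fun i => β i ⊗ₜ[k] γ i) = fun i => ι₀ (s i) := by
    funext i
    have hβi : β i = ((β i).1, (0 : B'')) := by
      rw [← h0 i]
    conv_lhs => rw [hβi]
    simp [hι₀, hs]
  have hWs : W' ≤ Submodule.span k (Set.range s) := by
    rw [← Submodule.map_le_map_iff_of_injective hinj]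
    refine le_trans hW ?_
    rw [hfam, show (fun i => ι₀ (s i)) = ι₀ ∘ s from rfl, Set.range_comp,
      ← Submodule.map_span]
  have h1 : sRank k W' ≤ n := sRank_le_of_family W' s (fun i => ⟨_, _, rfl⟩) hWs
  rw [hbot]
  simpa using h1

/-- Substitution induction: if `W' ⊆ B'⊗C'` (embedded) lies in the span of `n` simple
tensors in `(B'⊕B'')⊗C'`, then `R(W')` plus the dimension of the span of their
`B''`-components is at most `n`. -/
lemma key_induction (W' : Submodule k (B' ⊗[k] C')) :
    ∀ (n : ℕ) (β : Fin n → B' × B'') (γ : Fin n → C'),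
      W'.map (TensorProduct.map (LinearMap.inl k B' B'')
          (LinearMap.id (R := k) (M := C'))) ≤
        Submodule.span k (Set.range fun i => β i ⊗ₜ[k] γ i) →
      sRank k W' + Module.finrank k (Submodule.span k (Set.range fun i => (β i).2)) ≤ n := by
  intro n
  induction n with
  | zero =>
    intro β γ hW
    exact key_base W' 0 β γ (fun i => i.elim0) hW
  | succ n ih =>
    intro β γ hW
    by_cases h0 : ∀ i, (β i).2 = 0
    · exact key_base W' (n + 1) β γ h0 hW
    · push_neg at h0
      obtain ⟨i₀, hb2⟩ := h0
      have hφ' : ¬ ∀ φ : Module.Dual k B'', φ (β i₀).2 = 0 := by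
        rw [Module.forall_dual_apply_eq_zero_iff]
        exact hb2
      push_neg at hφ'
      obtain ⟨φ₀, hφ₀⟩ := hφ'
      set φ : B'' →ₗ[k] k := (φ₀ (β i₀).2)⁻¹ • φ₀ with hφdef
      have hφ : φ (β i₀).2 = 1 := by
        rw [hφdef]
        simp [inv_mul_cancel₀ hφ₀]
      set v := β i₀ with hv
      set ψ : B' × B'' →ₗ[k] B' × B'' :=
        LinearMap.id - (LinearMap.toSpanSingleton k _ v) ∘ₗ (φ ∘ₗ LinearMap.snd k B' B'')
        with hψdef
      set q : B'' →ₗ[k] B'' :=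
        LinearMap.id - (LinearMap.toSpanSingleton k _ v.2) ∘ₗ φ with hqdef
      have hψ_apply : ∀ x : B' × B'', ψ x = x - φ x.2 • v := by
        intro x
        simp [hψdef, LinearMap.toSpanSingleton_apply]
      have hq_apply : ∀ x : B'', q x = x - φ x • v.2 := by
        intro x
        simp [hqdef, LinearMap.toSpanSingleton_apply]
      have hψ2 : ∀ x : B' × B'', (ψ x).2 = q x.2 := by
        intro x
        rw [hψ_apply, hq_apply]
        simp
      have hψv : ψ v = 0 := by
        rw [hψ_apply, hφ, one_smul, sub_self]
      have hqv : q v.2 = 0 := by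
        rw [hq_apply, hφ, one_smul, sub_self]
      set Ψ := TensorProduct.map ψ (LinearMap.id (R := k) (M := C')) with hΨdef
      have hψinl : ψ ∘ₗ LinearMap.inl k B' B'' = LinearMap.inl k B' B'' := by
        apply LinearMap.ext
        intro b
        rw [LinearMap.comp_apply, hψ_apply]
        simp
      set β₁ : Fin n → B' × B'' := fun j => ψ (β (i₀.succAbove j)) with hβ₁
      set γ₁ : Fin n → C' := fun j => γ (i₀.succAbove j) with hγ₁
      have hΨfam : ∀ i, Ψ (β i ⊗ₜ[k] γ i) = ψ (β i) ⊗ₜ[k] γ i := by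
        intro i
        simp [hΨdef]
      have hWnew : W'.map (TensorProduct.map (LinearMap.inl k B' B'')
          (LinearMap.id (R := k) (M := C'))) ≤
          Submodule.span k (Set.range fun j => β₁ j ⊗ₜ[k] γ₁ j) := by
        have hcomp : Ψ ∘ₗ TensorProduct.map (LinearMap.inl k B' B'')
            (LinearMap.id (R := k) (M := C'))
            = TensorProduct.map (LinearMap.inl k B' B'') (LinearMap.id (R := k) (M := C')) := by
          rw [hΨdef, ← TensorProduct.map_comp, hψinl, LinearMap.id_comp]
        calc W'.map (TensorProduct.map (LinearMap.inl k B' B'')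
              (LinearMap.id (R := k) (M := C')))
            = (W'.map (TensorProduct.map (LinearMap.inl k B' B'')
              (LinearMap.id (R := k) (M := C')))).map Ψ := by
              rw [← Submodule.map_comp, hcomp]
          _ ≤ (Submodule.span k (Set.range fun i => β i ⊗ₜ[k] γ i)).map Ψ :=
              Submodule.map_mono hW
          _ ≤ Submodule.span k (Set.range fun j => β₁ j ⊗ₜ[k] γ₁ j) := by
              rw [Submodule.map_span]
              apply Submodule.span_le.mpr
              rintro x ⟨y, ⟨i, rfl⟩, rfl⟩
              rw [hΨfam]
              by_cases hi : i = i₀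
              · subst hi
                rw [← hv, hψv, TensorProduct.zero_tmul]
                exact Submodule.zero_mem _
              · obtain ⟨j, hj⟩ := Fin.exists_succAbove_eq hi
                apply Submodule.subset_span
                exact ⟨j, by simp only [hβ₁, hγ₁, hj]⟩
      have hkey := ih β₁ γ₁ hWnew
      set F := Submodule.span k (Set.range fun i => (β i).2) with hF
      set F₁ := Submodule.span k (Set.range fun j => (β₁ j).2) with hF₁
      have hmapq : F.map q = F₁ := by
        rw [hF, Submodule.map_span, hF₁]
        apply le_antisymm
        · apply Submodule.span_le.mpr
          rintro x ⟨y, ⟨i, rfl⟩, rfl⟩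
          show q ((β i).2) ∈ Submodule.span k (Set.range fun j => (β₁ j).2)
          by_cases hi : i = i₀
          · subst hi
            rw [← hv, hqv]
            exact Submodule.zero_mem _
          · obtain ⟨j, hj⟩ := Fin.exists_succAbove_eq hi
            exact Submodule.subset_span ⟨j, by simp only [hβ₁, hψ2, hj]⟩
        · apply Submodule.span_le.mpr
          rintro x ⟨j, rfl⟩
          show (β₁ j).2 ∈ Submodule.span k (⇑q '' Set.range fun i => (β i).2)
          refine Submodule.subset_span ⟨(β (i₀.succAbove j)).2, ⟨i₀.succAbove j, rfl⟩, ?_⟩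
          exact (by simp only [hβ₁, hψ2] : (β₁ j).2 = q ((β (i₀.succAbove j)).2)).symm
      have hkerq : LinearMap.ker q = (k ∙ v.2) := by
        apply le_antisymm
        · intro x hx
          rw [LinearMap.mem_ker, hq_apply, sub_eq_zero] at hx
          rw [Submodule.mem_span_singleton]
          exact ⟨φ x, hx.symm⟩
        · rw [Submodule.span_singleton_le_iff_mem, LinearMap.mem_ker, hq_apply, hφ,
            one_smul, sub_self]
      have hv2F : v.2 ∈ F := by
        rw [hF]
        exact Submodule.subset_span ⟨i₀, by rw [hv]⟩
      have hrn := LinearMap.finrank_range_add_finrank_ker (q ∘ₗ F.subtype)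
      have hrange : LinearMap.range (q ∘ₗ F.subtype) = F.map q := by
        rw [LinearMap.range_comp, Submodule.range_subtype]
      have hkerfr : Module.finrank k (LinearMap.ker (q ∘ₗ F.subtype)) = 1 := by
        rw [LinearMap.ker_comp, hkerq,
          (Submodule.comapSubtypeEquivOfLe
            ((Submodule.span_singleton_le_iff_mem _ _).mpr hv2F)).finrank_eq]
        exact finrank_span_singleton (by rw [hv]; exact hb2)
      rw [hrange, hkerfr, hmapq] at hrn
      omega

end Aux

/-- For a minimal decomposition `V` of `W = W' ⊕ W''` with minimal `E'' ⊆ B''` such that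
`π_{C''}(V) ⊆ (B' ⊕ E'') ⊗ C'`, one has `R(W') + dim E'' ≤ R(W) − dim W''`. -/
theorem sRank_add_ebis_le {k : Type*} [Field k] {B' B'' C' C'' : Type*}
    [AddCommGroup B'] [Module k B'] [FiniteDimensional k B']
    [AddCommGroup B''] [Module k B''] [FiniteDimensional k B'']
    [AddCommGroup C'] [Module k C'] [FiniteDimensional k C']
    [AddCommGroup C''] [Module k C''] [FiniteDimensional k C'']
    (W' : Submodule k (B' ⊗[k] C')) (W'' : Submodule k (B'' ⊗[k] C''))
    (V : Submodule k ((B' × B'') ⊗[k] (C' × C'')))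
    (hV : IsMinDecomp k (W'.map (ιL k B' B'' C' C'') ⊔ W''.map (ιR k B' B'' C' C'')) V)
    (E'' : Submodule k B'') (hE : IsEbisBound V E'')
    (hEmin : ∀ E₀ : Submodule k B'', IsEbisBound V E₀ → E'' ≤ E₀) :
    sRank k W' + Module.finrank k E'' + Module.finrank k W'' ≤
      sRank k (W'.map (ιL k B' B'' C' C'') ⊔ W''.map (ιR k B' B'' C' C'')) := by
  classical
  obtain ⟨hWV, hdim, hspan⟩ := hV
  set π₁ := projCbis k B' B'' C' C'' with hπ₁def
  have hπιL : π₁ ∘ₗ ιL k B' B'' C' C''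
      = TensorProduct.map (LinearMap.inl k B' B'') (LinearMap.id (R := k) (M := C')) := by
    rw [hπ₁def, projCbis, ιL, ← TensorProduct.map_comp, LinearMap.id_comp,
      LinearMap.fst_comp_inl]
  have hπιR : π₁ ∘ₗ ιR k B' B'' C' C'' = 0 := by
    apply TensorProduct.ext'
    intro b c
    simp [hπ₁def, projCbis, ιR]
  have hιRinj : Function.Injective (ιR k B' B'' C' C'') := by
    have h : (TensorProduct.map (LinearMap.snd k B' B'') (LinearMap.snd k C' C''))
        ∘ₗ ιR k B' B'' C' C'' = LinearMap.id := by
      rw [ιR, ← TensorProduct.map_comp, LinearMap.snd_comp_inr, LinearMap.snd_comp_inr,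
        TensorProduct.map_id]
    intro x y hxy
    have h2 := congrArg (TensorProduct.map (LinearMap.snd k B' B'') (LinearMap.snd k C' C'')) hxy
    rw [← LinearMap.comp_apply, ← LinearMap.comp_apply, h] at h2
    simpa using h2
  have hUspan : V.map π₁
      = Submodule.span k (π₁ '' {v | v ∈ V ∧ ∃ b c, v = b ⊗ₜ[k] c}) := by
    conv_lhs => rw [hspan]
    exact Submodule.map_span π₁ _
  obtain ⟨t, hts, htspan, htli⟩ :=
    exists_linearIndependent k (π₁ '' {v | v ∈ V ∧ ∃ b c, v = b ⊗ₜ[k] c})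
  have htfin : t.Finite := htli.setFinite
  haveI := htfin.fintype
  set n := Fintype.card t with hn
  set e : Fin n ≃ t := (Fintype.equivFin t).symm with he
  set u : Fin n → (B' × B'') ⊗[k] C' := fun i => (e i : (B' × B'') ⊗[k] C') with hu
  have hrangeu : Set.range u = t := by
    ext x
    constructor
    · rintro ⟨i, rfl⟩
      exact (e i).2
    · intro hx
      exact ⟨e.symm ⟨x, hx⟩, by rw [hu]; simp⟩
  have hsimple : ∀ i, ∃ b c, u i = b ⊗ₜ[k] c := by
    intro i
    have hmem : (u i) ∈ π₁ '' {v | v ∈ V ∧ ∃ b c, v = b ⊗ₜ[k] c} := hts (e i).2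
    obtain ⟨y, ⟨hyV, b, c, rfl⟩, hy⟩ := hmem
    exact ⟨b, c.1, by rw [← hy]; simp [hπ₁def, projCbis]⟩
  choose β γ hβγ using hsimple
  have hufam : u = fun i => β i ⊗ₜ[k] γ i := funext hβγ
  have hspanu : Submodule.span k (Set.range fun i => β i ⊗ₜ[k] γ i) = V.map π₁ := by
    rw [← hufam, hrangeu, htspan, ← hUspan]
  have hWle : W'.map (TensorProduct.map (LinearMap.inl k B' B'')
      (LinearMap.id (R := k) (M := C'))) ≤
      Submodule.span k (Set.range fun i => β i ⊗ₜ[k] γ i) := by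
    rw [hspanu, ← hπιL, Submodule.map_comp]
    exact Submodule.map_mono (le_trans le_sup_left hWV)
  have hkey := key_induction W' n β γ hWle
  have hnU : Module.finrank k (V.map π₁) = n := by
    have hVt : V.map π₁ = Submodule.span k t := by
      rw [hUspan, ← htspan]
    rw [hVt, finrank_span_set_eq_card htli, Set.toFinset_card]
  haveI : FiniteDimensional k ((B' × B'') ⊗[k] (C' × C'')) :=
    Module.Finite.tensorProduct k _ _
  have hXV : W''.map (ιR k B' B'' C' C'') ≤ V := le_trans le_sup_right hWV
  have hXmap : (W''.map (ιR k B' B'' C' C'')).map π₁ = ⊥ := by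
    rw [← Submodule.map_comp, hπιR]
    exact Submodule.map_zero _
  have hrn := finrank_map_add_finrank_le π₁ V (W''.map (ιR k B' B'' C' C'')) hXV hXmap
  have hW''eq : Module.finrank k (W''.map (ιR k B' B'' C' C'')) = Module.finrank k W'' :=
    ((Submodule.equivMapOfInjective _ hιRinj W'').finrank_eq).symm
  rw [hW''eq] at hrn
  have hbound : IsEbisBound V (Submodule.span k (Set.range fun i => (β i).2)) := by
    unfold IsEbisBound
    rw [← hπ₁def, ← hspanu]
    apply Submodule.span_le.mpr
    rintro x ⟨i, rfl⟩
    apply Submodule.subset_span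
    refine ⟨β i, ?_, γ i, Submodule.mem_top, rfl⟩
    rw [Submodule.mem_sup]
    refine ⟨LinearMap.inl k B' B'' (β i).1, LinearMap.mem_range.mpr ⟨(β i).1, rfl⟩,
      LinearMap.inr k B' B'' (β i).2,
      Submodule.mem_map.mpr ⟨(β i).2, Submodule.subset_span ⟨i, rfl⟩, rfl⟩, ?_⟩
    simp [Prod.ext_iff]
  have hE : Module.finrank k E''
      ≤ Module.finrank k (Submodule.span k (Set.range fun i => (β i).2)) :=
    Submodule.finrank_mono (hEmin _ hbound)
  omega
end
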